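/- Let (M, H) be a pair satisfying all the conditions of the bicocycle double cross product group construction (Proposition 2.3 of the paper). Then in the group M _γ⋈_θ H: for any x ∈ M, the element (x,1) satisfies (x,1)[(x^r, h^r)(x,1)] = (x,1) where x^r is a right inverse of x and h^r = θ(x,x^r)^r; consequently (x,1)⁻¹ = (x^r, θ(x,x^r)^r). -/
import Mathlib


/-- The bicocycle double cross product multiplication on `M × H`:
`(x,h)(x',h') = ( x·[varφ(h,x')·γ(ψ(h,x'),h')], [θ(x,varφ(h,x'))∗ψ(h,x')]∗h' )`. -/
def bdcpMul {M H : Type*}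
    (vphi : H → M → M) (psi : H → M → H) (phi : M → M → M)
    (th : M → M → H) (mu : H → H → H) (gam : H → H → M)
    (p q : M × H) : M × H :=
  (phi p.1 (phi (vphi p.2 q.1) (gam (psi p.2 q.1) q.2)),
   mu (mu (th p.1 (vphi p.2 q.1)) (psi p.2 q.1)) q.2)

/-- The conditions of the bicocycle double cross product construction for groups
(Proposition 2.3): normalization, unit laws, the eight mixed associativity-type
identities, and existence of one-sided inverses. -/
def BicocycleGroupConds {M H : Type*} (e : M) (o : H)
    (vphi : H → M → M) (psi : H → M → H) (phi : M → M → M)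
    (th : M → M → H) (mu : H → H → H) (gam : H → H → M) : Prop :=
  -- normalization
  (∀ x, vphi o x = x) ∧ (∀ h, vphi h e = e) ∧
  (∀ h, psi h e = h) ∧ (∀ x, psi o x = o) ∧
  (phi e e = e) ∧ (mu o o = o) ∧ (th e e = o) ∧ (gam o o = e) ∧
  -- unit laws for `·` and `∗`
  (∀ x, phi e x = x) ∧ (∀ x, phi x e = x) ∧
  (∀ h, mu o h = h) ∧ (∀ h, mu h o = h) ∧
  -- normalization of `θ` and `γ`
  (∀ x, th x e = o) ∧ (∀ x, th e x = o) ∧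
  (∀ h, gam h o = e) ∧ (∀ h, gam o h = e) ∧
  -- (3.13)
  (∀ h x' x'' h'',
    phi (vphi h (phi x' x'')) (gam (psi h (phi x' x'')) (mu (th x' x'') h'')) =
      phi (vphi h x') (phi (vphi (psi h x') x'') (gam (psi (psi h x') x'') h''))) ∧
  -- (3.14)
  (∀ h x' x'' h'',
    mu (psi h (phi x' x'')) (mu (th x' x'') h'') =
      mu (mu (th (vphi h x') (vphi (psi h x') x'')) (psi (psi h x') x'')) h'') ∧
  -- (3.15)
  (∀ x h h' x'',
    mu (th (phi x (gam h h')) (vphi (mu h h') x'')) (psi (mu h h') x'') =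
      mu (mu (th x (vphi h (vphi h' x''))) (psi h (vphi h' x''))) (psi h' x'')) ∧
  -- (3.16)
  (∀ x h h' x'',
    phi (phi x (gam h h')) (vphi (mu h h') x'') =
      phi x (phi (vphi h (vphi h' x'')) (gam (psi h (vphi h' x'')) (psi h' x'')))) ∧
  -- (3.17)
  (∀ x x' x'' h'',
    phi x (phi x' x'') =
      phi (phi x x') (phi (vphi (th x x') x'') (gam (psi (th x x') x'') h''))) ∧
  -- (3.18)
  (∀ x x' x'' h'',
    mu (th x (phi x' x'')) (mu (th x' x'') h'') =
      mu (mu (th (phi x x') (vphi (th x x') x'')) (psi (th x x') x'')) h'') ∧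
  -- (3.19)
  (∀ x h h' h'',
    phi (phi x (gam h h')) (gam (mu h h') h'') =
      phi x (phi (vphi h (gam h' h'')) (gam (psi h (gam h' h'')) (mu h' h'')))) ∧
  -- (3.20)
  (∀ (x : M) h h' h'',
    mu (mu h h') h'' =
      mu (mu (th x (vphi h (gam h' h''))) (psi h (gam h' h''))) (mu h' h'')) ∧
  -- existence of right and left inverses for `·` and `∗`
  (∀ x : M, ∃ xr, phi x xr = e) ∧ (∀ h : H, ∃ hr, mu h hr = o) ∧
  (∀ x : M, ∃ xl, phi xl x = e) ∧ (∀ h : H, ∃ hl, mu hl h = o)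

/-- In a bicocycle double cross product group `M _γ⋈_θ H`, for `x ∈ M`
with right inverse `x^r` and `h^r := θ(x, x^r)^r`, one has
`(x,1)[(x^r,h^r)(x,1)] = (x,1)`; consequently `(x,1)⁻¹ = (x^r, θ(x,x^r)^r)`. -/
theorem bicocycle_double_cross_product_group_right_inverse
    (M H : Type*) (e : M) (o : H)
    (vphi : H → M → M) (psi : H → M → H) (phi : M → M → M)
    (th : M → M → H) (mu : H → H → H) (gam : H → H → M)
    (hconds : BicocycleGroupConds e o vphi psi phi th mu gam)
    (x xr : M) (hr : H) (hxr : phi x xr = e) (hhr : mu (th x xr) hr = o) :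
    bdcpMul vphi psi phi th mu gam (x, o)
        (bdcpMul vphi psi phi th mu gam (xr, hr) (x, o)) = (x, o) ∧
    bdcpMul vphi psi phi th mu gam (x, o) (xr, hr) = (e, o) ∧
    bdcpMul vphi psi phi th mu gam (xr, hr) (x, o) = (e, o) := by
  obtain ⟨n1, n2, n3, n4, -, -, -, -, u1, u2, u3, u4, t1, t2, g1, g2,
    I13, I14, I15, I16, I17, I18, I19, I20, invR, invRH, invL, invLH⟩ := hconds
  -- `Y3` : θ-values against a matching γ are absorbed by μ.
  have Y3 : ∀ (X : M) (h1 h2 : H), mu (th X (gam h1 h2)) (mu h1 h2) = mu h1 h2 := by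
    intro X h1 h2
    have h := I20 X o h1 h2
    rw [u3, n1, n4, u4] at h
    exact h.symm
  -- `(*)` : if μ(h1,h2) = o then θ(X, γ(h1,h2)) = o.
  have star : ∀ (X : M) (h1 h2 : H), mu h1 h2 = o → th X (gam h1 h2) = o := by
    intro X h1 h2 hz
    have h := Y3 X h1 h2
    rw [hz, u4] at h
    exact h
  -- `M4` : absorption of γ(θ(a,b), h) by φ(a,b).
  have M4 : ∀ (a b : M) (h : H), phi (phi a b) (gam (th a b) h) = phi a b := by
    intro a b h
    have hh := I17 a b e h
    rw [u2, n2, n3, u1] at hh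
    exact hh.symm
  -- `M5` : if φ(a,b) = e then γ(θ(a,b), h) = e.
  have M5 : ∀ (a b : M), phi a b = e → ∀ h : H, gam (th a b) h = e := by
    intro a b hab h
    have hh := M4 a b h
    rw [hab, u1] at hh
    exact hh
  -- left unit for the product
  have unitL : ∀ r : M × H, bdcpMul vphi psi phi th mu gam (e, o) r = r := by
    rintro ⟨z, l⟩
    simp only [bdcpMul, n1, n4, t2, g2, u1, u2, u3, u4]
  -- associativity instance III : (u a ⋆ u b) ⋆ r = u a ⋆ (u b ⋆ r)  (raw (3.17)/(3.18))
  have IIIL : ∀ (a b : M) (r : M × H),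
      bdcpMul vphi psi phi th mu gam (phi a b, th a b) r
        = bdcpMul vphi psi phi th mu gam (a, o)
            (bdcpMul vphi psi phi th mu gam (b, o) r) := by
    rintro a b ⟨z, l⟩
    simp only [bdcpMul, n1, n4, g2, u2, u4, Prod.mk.injEq]
    exact ⟨(I17 a b z l).symm, (I18 a b z l).symm⟩
  -- decomposition UV : (a,h) ⋆ r = (a,o) ⋆ ((e,h) ⋆ r)
  have UVL : ∀ (a : M) (h : H) (r : M × H),
      bdcpMul vphi psi phi th mu gam (a, h) r
        = bdcpMul vphi psi phi th mu gam (a, o)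
            (bdcpMul vphi psi phi th mu gam (e, h) r) := by
    rintro a h ⟨z, l⟩
    simp only [bdcpMul, n1, n4, t2, g2, u1, u2, u3, u4, Prod.mk.injEq]
    refine ⟨trivial, ?_⟩
    -- mu (mu (th a V) n) l = mu (th a (phi V (gam n l))) (mu n l)
    have e1 := I18 a (vphi h z) (gam (psi h z) l) (mu (psi h z) l)
    rw [Y3 (vphi h z) (psi h z) l] at e1
    have e3 := I20 (phi a (vphi h z)) (th a (vphi h z)) (psi h z) l
    exact e3.trans e1.symm
  -- associativity instance VV : (v h1 ⋆ v h2) ⋆ r = v h1 ⋆ (v h2 ⋆ r)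
  have VVL : ∀ (h1 h2 : H) (r : M × H),
      bdcpMul vphi psi phi th mu gam (gam h1 h2, mu h1 h2) r
        = bdcpMul vphi psi phi th mu gam (e, h1)
            (bdcpMul vphi psi phi th mu gam (e, h2) r) := by
    rintro h1 h2 ⟨z, l⟩
    simp only [bdcpMul, t2, u1, u3, Prod.mk.injEq]
    -- abbreviations (only informal): V2 = vphi h2 z, n2 = psi h2 z, G2 = gam n2 l,
    -- C = phi V2 G2, D = mu n2 l, V' = vphi h1 V2, κ = psi h1 V2,
    -- Vμ = vphi (mu h1 h2) z, nμ = psi (mu h1 h2) z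
    have s2 := Y3 (vphi h2 z) (psi h2 z) l
    have s4 := I15 e h1 h2 z
    rw [u1, t2, u3] at s4
    -- s4 : mu (th (gam h1 h2) (vphi (mu h1 h2) z)) (psi (mu h1 h2) z)
    --        = mu (psi h1 (vphi h2 z)) (psi h2 z)
    have s1 := I14 h1 (vphi h2 z) (gam (psi h2 z) l) (mu (psi h2 z) l)
    rw [s2] at s1
    have s3 := I20 (vphi h1 (vphi h2 z)) (psi h1 (vphi h2 z)) (psi h2 z) l
    constructor
    · -- first components
      have f1 := I13 h1 (vphi h2 z) (gam (psi h2 z) l) (mu (psi h2 z) l)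
      rw [s2] at f1
      have f2 := I19 (vphi h1 (vphi h2 z)) (psi h1 (vphi h2 z)) (psi h2 z) l
      have f3 := I16 e h1 h2 z
      rw [u1, u1] at f3
      -- f3 : phi (gam h1 h2) (vphi (mu h1 h2) z) = phi (vphi h1 (vphi h2 z)) (gam (psi h1 (vphi h2 z)) (psi h2 z))
      have f4 := I17 (gam h1 h2) (vphi (mu h1 h2) z) (gam (psi (mu h1 h2) z) l)
        (mu (psi (mu h1 h2) z) l)
      have f5 := I19 (phi (gam h1 h2) (vphi (mu h1 h2) z))
        (th (gam h1 h2) (vphi (mu h1 h2) z)) (psi (mu h1 h2) z) l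
      have f6 := M4 (gam h1 h2) (vphi (mu h1 h2) z) (psi (mu h1 h2) z)
      calc phi (gam h1 h2) (phi (vphi (mu h1 h2) z) (gam (psi (mu h1 h2) z) l))
          = phi (phi (gam h1 h2) (vphi (mu h1 h2) z))
              (phi (vphi (th (gam h1 h2) (vphi (mu h1 h2) z)) (gam (psi (mu h1 h2) z) l))
                (gam (psi (th (gam h1 h2) (vphi (mu h1 h2) z)) (gam (psi (mu h1 h2) z) l))
                  (mu (psi (mu h1 h2) z) l))) := f4
        _ = phi (phi (phi (gam h1 h2) (vphi (mu h1 h2) z))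
              (gam (th (gam h1 h2) (vphi (mu h1 h2) z)) (psi (mu h1 h2) z)))
              (gam (mu (th (gam h1 h2) (vphi (mu h1 h2) z)) (psi (mu h1 h2) z)) l) := f5.symm
        _ = phi (phi (gam h1 h2) (vphi (mu h1 h2) z))
              (gam (mu (th (gam h1 h2) (vphi (mu h1 h2) z)) (psi (mu h1 h2) z)) l) := by
              rw [f6]
        _ = phi (phi (gam h1 h2) (vphi (mu h1 h2) z))
              (gam (mu (psi h1 (vphi h2 z)) (psi h2 z)) l) := by rw [s4]
        _ = phi (phi (vphi h1 (vphi h2 z)) (gam (psi h1 (vphi h2 z)) (psi h2 z)))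
              (gam (mu (psi h1 (vphi h2 z)) (psi h2 z)) l) := by rw [f3]
        _ = phi (vphi h1 (vphi h2 z))
              (phi (vphi (psi h1 (vphi h2 z)) (gam (psi h2 z) l))
                (gam (psi (psi h1 (vphi h2 z)) (gam (psi h2 z) l)) (mu (psi h2 z) l))) := f2
        _ = phi (vphi h1 (phi (vphi h2 z) (gam (psi h2 z) l)))
              (gam (psi h1 (phi (vphi h2 z) (gam (psi h2 z) l))) (mu (psi h2 z) l)) := f1.symm
    · -- second components
      calc mu (mu (th (gam h1 h2) (vphi (mu h1 h2) z)) (psi (mu h1 h2) z)) l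
          = mu (mu (psi h1 (vphi h2 z)) (psi h2 z)) l := by rw [s4]
        _ = mu (mu (th (vphi h1 (vphi h2 z))
              (vphi (psi h1 (vphi h2 z)) (gam (psi h2 z) l)))
              (psi (psi h1 (vphi h2 z)) (gam (psi h2 z) l))) (mu (psi h2 z) l) := s3
        _ = mu (psi h1 (phi (vphi h2 z) (gam (psi h2 z) l))) (mu (psi h2 z) l) := s1.symm
  -- γ(k, h) = e for k = θ(x, xr)
  have hk : ∀ h' : H, gam (th x xr) h' = e := M5 x xr hxr
  -- the universal retraction : u x ⋆ (a ⋆ r) = r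
  have Fvi : ∀ r : M × H,
      bdcpMul vphi psi phi th mu gam (x, o)
        (bdcpMul vphi psi phi th mu gam (xr, hr) r) = r := by
    intro r
    rw [UVL xr hr r, ← IIIL x xr (bdcpMul vphi psi phi th mu gam (e, hr) r), hxr,
      ← VVL (th x xr) hr r, hk hr, hhr]
    exact unitL r
  -- claim 2 : (x,o) ⋆ (xr,hr) = (e,o)
  have claim2 : bdcpMul vphi psi phi th mu gam (x, o) (xr, hr) = (e, o) := by
    simp only [bdcpMul, n1, n4, g2, u2, u4, Prod.mk.injEq]
    exact ⟨hxr, hhr⟩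
  -- claim 3 : (xr,hr) ⋆ (x,o) = (e,o), via a three-stage left cancellation
  obtain ⟨xl, hxl⟩ := invL x
  obtain ⟨tl, htl⟩ := invLH (th xl x)
  obtain ⟨gl, hgl⟩ := invL (gam tl (th xl x))
  have hgl0 : th gl (gam tl (th xl x)) = o := star gl tl (th xl x) htl
  have hc1 : bdcpMul vphi psi phi th mu gam (x, o)
      (bdcpMul vphi psi phi th mu gam (xr, hr) (x, o)) = (x, o) := Fvi (x, o)
  -- S1 : (e, t) ⋆ D = (e, t) where t = θ(xl, x), D = (xr,hr)⋆(x,o)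
  have S1 : bdcpMul vphi psi phi th mu gam (e, th xl x)
      (bdcpMul vphi psi phi th mu gam (xr, hr) (x, o)) = (e, th xl x) := by
    have h1 := IIIL xl x (bdcpMul vphi psi phi th mu gam (xr, hr) (x, o))
    rw [hxl, hc1] at h1
    rw [h1]
    simp only [bdcpMul, n1, n4, g1, u2, u4, Prod.mk.injEq]
    exact ⟨hxl, trivial⟩
  -- S2 : (g, o) ⋆ D = (g, o) where g = γ(tl, t)
  have S2 : bdcpMul vphi psi phi th mu gam (gam tl (th xl x), o)
      (bdcpMul vphi psi phi th mu gam (xr, hr) (x, o)) = (gam tl (th xl x), o) := by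
    have h2 := VVL tl (th xl x) (bdcpMul vphi psi phi th mu gam (xr, hr) (x, o))
    rw [htl, S1] at h2
    rw [h2]
    simp only [bdcpMul, n2, n3, t2, u1, u3, Prod.mk.injEq]
    exact ⟨trivial, htl⟩
  -- S3 : D = (e,o)
  have S3 : bdcpMul vphi psi phi th mu gam (xr, hr) (x, o) = (e, o) := by
    have h3 := IIIL gl (gam tl (th xl x)) (bdcpMul vphi psi phi th mu gam (xr, hr) (x, o))
    rw [hgl, hgl0, S2, unitL] at h3
    rw [h3]
    simp only [bdcpMul, n1, n4, g1, u2, u4, Prod.mk.injEq]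
    exact ⟨hgl, hgl0⟩
  exact ⟨hc1, claim2, S3⟩
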